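/- Let O ⊆ P contain A. For any (i,j) ∈ P one has |r(i,j)| ≥ i and |r(i,j)| ⩽̇ −j (i.e. |r(i,j)| ≤ −j in the order 1 ⋖ … ⋖ n ⋖ −n ⋖ … ⋖ −1, where |r(i,j)| is interpreted as a positive element and −j is also compared in this order). -/

import Mathlib

open scoped Classical Pointwise

noncomputable section

/-- Position of `j` in the total order `1 ⋖ … ⋖ n ⋖ -n ⋖ … ⋖ -1` on `N`. -/
def ordKey (n : ℕ) (j : ℤ) : ℤ := if 0 < j then j else 2 * n + 1 + j

/-- Membership in the type C Gelfand–Tsetlin poset `P`: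
pairs `(i,j)` with `1 ≤ i ≤ n` and `i ≤ |j| ≤ n`. -/
def inP (n : ℕ) (p : ℤ × ℤ) : Prop :=
  1 ≤ p.1 ∧ p.1 ≤ (n : ℤ) ∧ p.1 ≤ |p.2| ∧ |p.2| ≤ (n : ℤ)

/-- The order relation `⪯` of `P`: `(i₁,j₁) ⪯ (i₂,j₂)` iff `i₁ ≤ i₂` and `j₁ ⩽̇ j₂`. -/
def ple (n : ℕ) (p q : ℤ × ℤ) : Prop :=
  p.1 ≤ q.1 ∧ ordKey n p.2 ≤ ordKey n q.2

/-- Strict version of `⪯`. -/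
def plt (n : ℕ) (p q : ℤ × ℤ) : Prop := ple n p q ∧ p ≠ q

/-- The elements of `N = {1,…,n,-n,…,-1}` listed in increasing `⋖` order. -/
def jList (n : ℕ) : List ℤ :=
  ((List.range n).map fun t => (t : ℤ) + 1) ++ ((List.range n).map fun t => (t : ℤ) - n)

/-- All pairs `(i,j)` with `i ∈ [1,n]`, `j ∈ N`, ordered first by `i` increasing,
then by `j` increasing with respect to `⋖`. -/
def posList (n : ℕ) : List (ℤ × ℤ) :=
  (List.range n).flatMap fun a => (jList n).map fun j => ((a : ℤ) + 1, j)

/-- `P` as a finite set. -/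
def Pfin (n : ℕ) : Finset (ℤ × ℤ) := (posList n).toFinset.filter (inP n)

/-- `N` as a finite set. -/
def Nfin (n : ℕ) : Finset ℤ := (jList n).toFinset

/-- The diagonal `A = {(i,i) : 1 ≤ i ≤ n}`. -/
def Aset (n : ℕ) : Finset (ℤ × ℤ) :=
  (Finset.range n).image fun t => (((t : ℤ) + 1, (t : ℤ) + 1) : ℤ × ℤ)

/-- Order ideals (downward closed subsets) of `P`. -/
def IsIdeal (n : ℕ) (J : Finset (ℤ × ℤ)) : Prop :=
  (∀ p ∈ J, inP n p) ∧ ∀ p ∈ J, ∀ q ∈ Pfin n, ple n q p → q ∈ J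

/-- The set of `≺`-maximal elements of `J`. -/
def maxPrec (n : ℕ) (J : Finset (ℤ × ℤ)) : Finset (ℤ × ℤ) :=
  J.filter fun p => ∀ q ∈ J, ple n p q → q = p

/-- `M_O(J) = (J ∩ O) ∪ max_≺(J)`. -/
def MO (n : ℕ) (O J : Finset (ℤ × ℤ)) : Finset (ℤ × ℤ) := (J ∩ O) ∪ maxPrec n J

/-- The permutation `w_M`: the product of the transpositions `s_{i,j}` over `(i,j) ∈ M`,
ordered first by `i` increasing and then by `j` increasing with respect to `⋖`
(the leftmost factor acts last). -/
def wPerm (n : ℕ) (M : Finset (ℤ × ℤ)) : Equiv.Perm ℤ :=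
  (((posList n).filter fun p => decide (p ∈ M)).map fun p => Equiv.swap p.1 p.2).prod

/-- `w^{O,J} = w_O⁻¹ ⬝ w_{M_O(J)}`. -/
def wOJ (n : ℕ) (O J : Finset (ℤ × ℤ)) : Equiv.Perm ℤ :=
  (wPerm n O)⁻¹ * wPerm n (MO n O J)

/-- The principal order ideal `⟨i,j⟩` of `(i,j) ∈ P`. -/
def princ (n : ℕ) (p : ℤ × ℤ) : Finset (ℤ × ℤ) := (Pfin n).filter fun q => ple n q p

/-- `r(i,j) = w^{O,⟨i,j⟩}(i)`. -/
def rMap (n : ℕ) (O : Finset (ℤ × ℤ)) (i j : ℤ) : ℤ := wOJ n O (princ n (i, j)) i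

/-- Inverse of `ordKey` (on the relevant range `[1, 2n]`). -/
def invOrdKey (n : ℕ) (t : ℤ) : ℤ := if t ≤ (n : ℤ) then t else t - (2 * n + 1)

/-- The `⋖`-maximal `j'` with `j' ⋖ j` and `(i,j') ∈ O`. -/
def prevO (n : ℕ) (O : Finset (ℤ × ℤ)) (i j : ℤ) : ℤ :=
  invOrdKey n (((((Nfin n).filter fun j' => (i, j') ∈ O ∧ ordKey n j' < ordKey n j).image
    (ordKey n)).max).unbotD 0)

/-- The pipe-dream linear transform `ξ` of `ℝ^P` (coordinates outside `P` are untouched):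
`ξ(ε_{i,i}) = ε_{i,r(i,i)}` and `ξ(ε_{i,j}) = ε_{i,r(i,j)} - ε_{i,r(i,j')}` for `j ≠ i`,
where `j'` is `⋖`-maximal with `j' ⋖ j` and `(i,j') ∈ O`. -/
def xiMap (n : ℕ) (O : Finset (ℤ × ℤ)) (x : (ℤ × ℤ) → ℝ) : (ℤ × ℤ) → ℝ := fun q =>
  if inP n q then
    (∑ j ∈ (Nfin n).filter (fun j => inP n (q.1, j) ∧ rMap n O q.1 j = q.2), x (q.1, j))
    - (∑ j ∈ (Nfin n).filter
        (fun j => inP n (q.1, j) ∧ j ≠ q.1 ∧ rMap n O q.1 (prevO n O q.1 j) = q.2), x (q.1, j))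
  else x q

/-- Indicator vector `1_{M_O(J)} ∈ ℝ^P`. -/
def indicMO (n : ℕ) (O J : Finset (ℤ × ℤ)) : (ℤ × ℤ) → ℝ := fun p =>
  if p ∈ MO n O J then 1 else 0

/-- The fundamental marked chain-order polytope `𝒬_O(ω_k)`:
the convex hull of the vectors `1_{M_O(J)}`, `J ∈ 𝒥ₖ`. -/
def QOfund (n : ℕ) (O : Finset (ℤ × ℤ)) (k : ℕ) : Set ((ℤ × ℤ) → ℝ) :=
  convexHull ℝ {x | ∃ J : Finset (ℤ × ℤ),
    IsIdeal n J ∧ (J ∩ Aset n).card = k ∧ x = indicMO n O J}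

/-- The marked chain-order polytope `𝒬_O(λ)` for `λ = a₁ω₁ + … + a_nω_n`:
the Minkowski sum `a₁𝒬_O(ω₁) + … + a_n𝒬_O(ω_n)`. -/
def QO (n : ℕ) (O : Finset (ℤ × ℤ)) (a : ℕ → ℕ) : Set ((ℤ × ℤ) → ℝ) :=
  ∑ k ∈ Finset.Icc 1 n, a k • QOfund n O k

/-- Integrality (lattice point) predicate. -/
def IsLat (x : (ℤ × ℤ) → ℝ) : Prop := ∀ p, ∃ m : ℤ, x p = m

/-- Type B: `λ(i) = a_i + … + a_{n-1} + a_n/2`. -/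
def lamB (n : ℕ) (a : ℕ → ℕ) (i : ℤ) : ℝ :=
  (∑ t ∈ Finset.Icc i.toNat (n - 1), (a t : ℝ)) + (a n : ℝ) / 2

/-- The type B poset polytope `𝒬^B_O(λ)` (H-description with factor `1/2`
on the coordinates in `B = {(i,-i)}`). -/
def QB (n : ℕ) (O : Finset (ℤ × ℤ)) (lam : ℤ → ℝ) : Set ((ℤ × ℤ) → ℝ) :=
  {x | (∀ i : ℤ, 1 ≤ i → i ≤ (n : ℤ) → x (i, i) = lam i) ∧
    (∀ p, inP n p → 0 ≤ x p) ∧ (∀ p, ¬ inP n p → x p = 0) ∧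
    ∀ (pq rs : ℤ × ℤ) (c : List (ℤ × ℤ)), pq ∈ O → inP n rs →
      (∀ q ∈ c, inP n q ∧ q ∉ O) →
      List.Chain' (plt n) (pq :: (c ++ [rs])) →
      (c.map x).sum ≤ x pq - (if rs.2 = -rs.1 then (1 : ℝ) / 2 else 1) * x rs}

/-- The point `x^{J,D}`. -/
def xJD (n : ℕ) (O J : Finset (ℤ × ℤ)) (D : Finset ℤ) : (ℤ × ℤ) → ℝ := fun p =>
  if p ∈ MO n O J then (if p.2 = -p.1 ∧ p.1 ∉ D then 2 else 1) else 0

/-- The projection `π : ℝ^P → ℝ^{P∖A}` (realized by zeroing the `A`-coordinates). -/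
def piA (x : (ℤ × ℤ) → ℝ) : (ℤ × ℤ) → ℝ := fun p => if p.2 = p.1 then 0 else x p

/-- The transformed type B poset polytope `Π^B_O(λ) = πξ(𝒬^B_O(λ))`. -/
def PiB (n : ℕ) (O : Finset (ℤ × ℤ)) (a : ℕ → ℕ) : Set ((ℤ × ℤ) → ℝ) :=
  (fun x => piA (xiMap n O x)) '' QB n O (lamB n a)

/-- The point `y^D ∈ ℝ^{P∖A}`. -/
def yD (D : Finset ℤ) : (ℤ × ℤ) → ℝ := fun p => if p.2 = -p.1 ∧ p.1 ∈ D then 1 else 0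

/-!
`w_M` factors row by row: row `r` contributes the transpositions `(r c)`, `(r, c) ∈ M`, in `⋖`
order. For `M = M_O(⟨i,j⟩)` the rows after `i` are empty, row `i` ends with `j`, and each row
`r < i` is the row of `O` cut off after `j`; the cut-off transpositions act first and fix every
value `⩽̇ j`, so `w_M(i)` is the image of `j` under the rows `< i` of `w_O`, and `r(i,j)` is the
image of `j` under the inverse of the rows `≥ i` of `w_O`. A row `r ≥ i` only moves values `c`
with `i ≤ |c| ≤ n`, which gives `i ≤ |r(i,j)| ≤ n`. For `j < 0` one uses that the inverse of a
row acts as the cycle `r → c₁ → c₂ → ⋯ → r` through its entries in `⋖` order: it never increases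
the absolute value of a negative value and produces positive values no larger than the current
row, so `|r(i,j)| ≤ |j|`.
-/

lemma List.Pairwise.filter_append_filter_not {α : Type*} {p : α → Bool} :
    ∀ {l : List α}, l.Pairwise (fun a b => p b → p a) → l.filter p ++ l.filter (!p ·) = l
  | [], _ => rfl
  | c :: l, hl => by
    rw [List.pairwise_cons] at hl
    by_cases hc : p c
    · simp [hc, hl.2.filter_append_filter_not]
    · have hfalse : l.filter p = [] :=
        List.filter_eq_nil_iff.2 fun a ha hpa => hc (hl.1 a ha hpa)
      have hrest := hl.2.filter_append_filter_not
      rw [hfalse, List.nil_append] at hrest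
      rw [List.filter_cons_of_neg hc, List.filter_cons_of_pos (by simpa using hc), hfalse, hrest,
        List.nil_append]

section SwapProd

variable {α : Type*} [DecidableEq α]

def swapProd (r : α) (l : List α) : Equiv.Perm α := (l.map (Equiv.swap r)).prod

@[simp] lemma swapProd_nil (r : α) : swapProd r [] = 1 := rfl

@[simp] lemma swapProd_cons (r c : α) (l : List α) :
    swapProd r (c :: l) = Equiv.swap r c * swapProd r l := by
  simp [swapProd]

@[simp] lemma swapProd_append (r : α) (l₁ l₂ : List α) :
    swapProd r (l₁ ++ l₂) = swapProd r l₁ * swapProd r l₂ := by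
  simp [swapProd]

lemma swapProd_inv (r : α) (l : List α) : (swapProd r l)⁻¹ = swapProd r l.reverse := by
  simp [swapProd, List.prod_inv_reverse, List.map_reverse, Function.comp_def, Equiv.swap_inv]

lemma swapProd_apply_of_not_mem {r v : α} {l : List α} (hvr : v ≠ r) (hvl : v ∉ l) :
    swapProd r l v = v := by
  induction l with
  | nil => rfl
  | cons c l ih =>
    rw [List.mem_cons, not_or] at hvl
    rw [swapProd_cons, Equiv.Perm.mul_apply, ih hvl.2, Equiv.swap_apply_of_ne_of_ne hvr hvl.1]

lemma swapProd_apply_mem (r : α) (l : List α) (v : α) :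
    swapProd r l v = v ∨ swapProd r l v = r ∨ swapProd r l v ∈ l := by
  induction l with
  | nil => exact Or.inl rfl
  | cons c l ih =>
    rw [swapProd_cons, Equiv.Perm.mul_apply, Equiv.swap_apply_def]
    split_ifs <;> simp_all

lemma swapProd_inv_apply_mem (r : α) (l : List α) (v : α) :
    (swapProd r l)⁻¹ v = v ∨ (swapProd r l)⁻¹ v = r ∨ (swapProd r l)⁻¹ v ∈ l := by
  simpa [swapProd_inv] using swapProd_apply_mem r l.reverse v

lemma swapProd_inv_apply_of_not_mem {r v : α} {l : List α} (hvr : v ≠ r) (hvl : v ∉ l) :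
    (swapProd r l)⁻¹ v = v := by
  rw [swapProd_inv]
  exact swapProd_apply_of_not_mem hvr (by simpa using hvl)

/-- `(swapProd r l)⁻¹` is the cycle `r → l₀ → l₁ → ⋯ → r` (when `r ∉ l`). -/
lemma swapProd_inv_apply_of_mem {R : α → α → Prop} {r v : α} {l : List α}
    (hl : l.Pairwise R) (hvl : v ∈ l) (hvr : v ≠ r) :
    (swapProd r l)⁻¹ v = r ∨ ((swapProd r l)⁻¹ v ∈ l ∧ R v ((swapProd r l)⁻¹ v)) := by
  induction l with
  | nil => simp at hvl
  | cons c l ih =>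
    rw [List.pairwise_cons] at hl
    rw [swapProd_cons, mul_inv_rev, Equiv.swap_inv, Equiv.Perm.mul_apply]
    rcases eq_or_ne v c with rfl | hvc
    · rw [Equiv.swap_apply_right]
      rcases swapProd_inv_apply_mem r l r with h | h | h
      · exact Or.inl h
      · exact Or.inl h
      · exact Or.inr ⟨List.mem_cons_of_mem _ h, hl.1 _ h⟩
    · rw [Equiv.swap_apply_of_ne_of_ne hvr hvc]
      rcases ih hl.2 ((List.mem_cons.1 hvl).resolve_left hvc) with h | ⟨hmem, hR⟩
      · exact Or.inl h
      · exact Or.inr ⟨List.mem_cons_of_mem _ hmem, hR⟩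

end SwapProd

section GelfandTsetlin

variable {n : ℕ}

/-- In `jList` and `posList`, `List.range n` is coerced to `List ℤ` through this `do` block. -/
lemma range_natCast_eq_map (n : ℕ) :
    (do let a ← List.range n; pure (a : ℤ)) = (List.range n).map ((↑) : ℕ → ℤ) := by
  simp [List.map_eq_flatMap]

lemma ordKey_of_pos {c : ℤ} (hc : 0 < c) : ordKey n c = c := if_pos hc

lemma ordKey_of_nonpos {c : ℤ} (hc : c ≤ 0) : ordKey n c = 2 * n + 1 + c :=
  if_neg hc.not_gt

lemma abs_le_ordKey {c : ℤ} (hc : |c| ≤ n) : |c| ≤ ordKey n c := by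
  unfold ordKey; split_ifs <;> cases abs_cases c <;> omega

lemma ordKey_injOn (n : ℕ) : Set.InjOn (ordKey n) {c | |c| ≤ n} := by
  intro a ha b hb h
  simp only [Set.mem_ofPred_eq, ordKey] at ha hb h
  split_ifs at h <;> cases abs_cases a <;> cases abs_cases b <;> omega

lemma mem_jList {c : ℤ} : c ∈ jList n ↔ c ≠ 0 ∧ |c| ≤ n := by
  simp only [jList, range_natCast_eq_map, List.map_map, List.mem_append, List.mem_map,
    List.mem_range, Function.comp_apply]
  constructor
  · rintro (⟨t, ht, rfl⟩ | ⟨t, ht, rfl⟩) <;> constructor <;> cases abs_cases ((t : ℤ) + 1) <;>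
      cases abs_cases ((t : ℤ) - n) <;> omega
  · rintro ⟨h0, hn⟩
    rcases lt_or_gt_of_ne h0 with h | h
    · exact Or.inr ⟨(c + n).toNat, by cases abs_cases c <;> omega, by cases abs_cases c <;> omega⟩
    · exact Or.inl ⟨(c - 1).toNat, by cases abs_cases c <;> omega, by omega⟩

lemma jList_pairwise (n : ℕ) : (jList n).Pairwise fun a b => ordKey n a < ordKey n b := by
  have hpos (t : ℕ) : ordKey n ((t : ℤ) + 1) = t + 1 := ordKey_of_pos (by omega)
  have hneg (t : ℕ) (ht : t < n) : ordKey n ((t : ℤ) - n) = n + 1 + t := by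
    rw [ordKey_of_nonpos (by omega)]; ring
  simp only [jList, range_natCast_eq_map, List.map_map, List.pairwise_append, List.pairwise_map,
    List.mem_map, List.mem_range, Function.comp_apply]
  refine ⟨List.pairwise_lt_range.imp fun h => by simp only [hpos]; omega,
    List.pairwise_lt_range.imp_of_mem fun ha hb h => ?_, ?_⟩
  · rw [List.mem_range] at ha hb
    rw [hneg _ ha, hneg _ hb]; omega
  · rintro _ ⟨s, hs, rfl⟩ _ ⟨t, ht, rfl⟩
    rw [hpos, hneg _ ht]; omega

lemma inP_mk_iff {x y : ℤ} : inP n (x, y) ↔ 1 ≤ x ∧ x ≤ n ∧ x ≤ |y| ∧ |y| ≤ n :=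
  Iff.rfl

lemma mem_jList_of_inP {x y : ℤ} (h : inP n (x, y)) : y ∈ jList n := by
  obtain ⟨h1, -, h3, h4⟩ := h
  exact mem_jList.2 ⟨by rintro rfl; simp at h3; omega, h4⟩

lemma mem_Pfin {p : ℤ × ℤ} : p ∈ Pfin n ↔ inP n p := by
  refine ⟨fun h => (Finset.mem_filter.1 h).2, fun h => Finset.mem_filter.2 ⟨?_, h⟩⟩
  obtain ⟨x, y⟩ := p
  simp only [posList, range_natCast_eq_map, List.flatMap_map, List.mem_toFinset,
    List.mem_flatMap, List.mem_range, List.mem_map, Prod.mk.injEq]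
  obtain ⟨h1, h2, -, -⟩ := id h
  exact ⟨(x - 1).toNat, by omega, y, mem_jList_of_inP h, by omega, rfl⟩

end GelfandTsetlin

section Rows

variable {n : ℕ} {S : Finset (ℤ × ℤ)}

def rowList (n : ℕ) (S : Finset (ℤ × ℤ)) (r : ℤ) : List ℤ :=
  (jList n).filter fun c => (r, c) ∈ S

def rowPerm (n : ℕ) (S : Finset (ℤ × ℤ)) (r : ℤ) : Equiv.Perm ℤ := swapProd r (rowList n S r)

/-- `rowPerm n S (s + 1) * ⋯ * rowPerm n S (s + k)`. -/
def rowsPerm (n : ℕ) (S : Finset (ℤ × ℤ)) (s k : ℕ) : Equiv.Perm ℤ :=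
  ((List.range' s k).map fun a : ℕ => rowPerm n S (a + 1)).prod

lemma mem_rowList (hS : S ⊆ Pfin n) {r c : ℤ} : c ∈ rowList n S r ↔ (r, c) ∈ S := by
  simp only [rowList, List.mem_filter, decide_eq_true_eq, and_iff_right_iff_imp]
  exact fun h => mem_jList_of_inP (mem_Pfin.1 (hS h))

lemma inP_of_mem_rowList (hS : S ⊆ Pfin n) {r c : ℤ} (hc : c ∈ rowList n S r) :
    1 ≤ r ∧ r ≤ n ∧ r ≤ |c| ∧ |c| ≤ n :=
  mem_Pfin.1 (hS ((mem_rowList hS).1 hc))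

lemma rowList_pairwise (n : ℕ) (S : Finset (ℤ × ℤ)) (r : ℤ) :
    (rowList n S r).Pairwise fun a b => ordKey n a < ordKey n b :=
  (jList_pairwise n).filter _

lemma rowList_filter_append_filter_not (n : ℕ) (S : Finset (ℤ × ℤ)) (r : ℤ) {p : ℤ → Bool}
    (hp : ∀ a b, ordKey n a < ordKey n b → p b → p a) :
    (rowList n S r).filter p ++ (rowList n S r).filter (!p ·) = rowList n S r :=
  ((rowList_pairwise n S r).imp (hp _ _)).filter_append_filter_not

@[simp] lemma rowsPerm_zero (n : ℕ) (S : Finset (ℤ × ℤ)) (s : ℕ) : rowsPerm n S s 0 = 1 := rfl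

lemma rowsPerm_succ (n : ℕ) (S : Finset (ℤ × ℤ)) (s k : ℕ) :
    rowsPerm n S s (k + 1) = rowPerm n S (s + 1) * rowsPerm n S (s + 1) k := by
  simp [rowsPerm, List.range'_succ]

lemma rowsPerm_add (n : ℕ) (S : Finset (ℤ × ℤ)) (s k₁ k₂ : ℕ) :
    rowsPerm n S s (k₁ + k₂) = rowsPerm n S s k₁ * rowsPerm n S (s + k₁) k₂ := by
  simp [rowsPerm, ← List.range'_append_1]

lemma wPerm_eq_rowsPerm (n : ℕ) (S : Finset (ℤ × ℤ)) : wPerm n S = rowsPerm n S 0 n := by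
  simp [wPerm, posList, rowsPerm, rowPerm, swapProd, rowList, List.flatMap_def,
    List.prod_flatten, List.map_map, List.filter_map, List.range_eq_range', Function.comp_def]

lemma wPerm_eq_rowsPerm_mul (n : ℕ) (S : Finset (ℤ × ℤ)) {k : ℕ} (hk : k ≤ n) :
    wPerm n S = rowsPerm n S 0 k * rowsPerm n S k (n - k) := by
  have h := rowsPerm_add n S 0 k (n - k)
  rwa [zero_add, Nat.add_sub_cancel' hk, ← wPerm_eq_rowsPerm] at h

lemma rowsPerm_inv_apply_induction (P : ℕ → ℤ → Prop) {s k : ℕ}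
    (hstep : ∀ m, s ≤ m → m < s + k → ∀ w, P m w → P (m + 1) ((rowPerm n S (m + 1))⁻¹ w))
    {v : ℤ} (hv : P s v) : P (s + k) ((rowsPerm n S s k)⁻¹ v) := by
  induction k generalizing s v with
  | zero => exact hv
  | succ k ih =>
    rw [rowsPerm_succ, mul_inv_rev, Equiv.Perm.mul_apply, ← add_assoc, add_right_comm]
    exact ih (fun m hm hmk => hstep m (by omega) (by omega))
      (by exact_mod_cast hstep s le_rfl (by omega) v hv)

lemma abs_rowsPerm_inv_apply_mem_Icc (hS : S ⊆ Pfin n) {i : ℤ} {s k : ℕ} (hs : i ≤ s + 1)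
    (hk : s + k ≤ n) {v : ℤ} (hv : |v| ∈ Set.Icc i n) :
    |(rowsPerm n S s k)⁻¹ v| ∈ Set.Icc i n := by
  refine rowsPerm_inv_apply_induction (fun _ w => |w| ∈ Set.Icc i n)
    (fun m hm hmk w hw => ?_) hv
  rw [rowPerm]
  rcases swapProd_inv_apply_mem ((m : ℤ) + 1) (rowList n S (m + 1)) w with h | h | h
  · rwa [h]
  · rw [h, abs_of_pos (by omega)]
    exact ⟨by omega, by omega⟩
  · obtain ⟨-, -, hmc, hcn⟩ := inP_of_mem_rowList hS h
    exact ⟨by omega, hcn⟩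

lemma abs_rowsPerm_inv_apply_le (hS : S ⊆ Pfin n) {s k : ℕ} {v : ℤ} (hv : v ≤ s) :
    |(rowsPerm n S s k)⁻¹ v| ≤ |v| := by
  refine (rowsPerm_inv_apply_induction (fun m w => w ≤ m ∧ |w| ≤ |v|)
    (fun m _ _ w hw => ?_) ⟨hv, le_rfl⟩).2
  obtain ⟨hwm, hwv⟩ := hw
  have hwr : w ≠ (m : ℤ) + 1 := by omega
  push_cast
  rw [rowPerm]
  by_cases hw : w ∈ rowList n S (m + 1)
  · obtain ⟨-, -, hmw, hwn⟩ := inP_of_mem_rowList hS hw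
    have hwneg : w < 0 := by cases abs_cases w <;> omega
    rcases swapProd_inv_apply_of_mem (rowList_pairwise n S (m + 1)) hw hwr with h | ⟨hu, hlt⟩
    · rw [h, abs_of_pos (by omega)]
      exact ⟨le_rfl, by cases abs_cases w <;> omega⟩
    · set u := (swapProd ((m : ℤ) + 1) (rowList n S (m + 1)))⁻¹ w
      obtain ⟨-, -, hmu, hun⟩ := inP_of_mem_rowList hS hu
      rw [ordKey_of_nonpos hwneg.le] at hlt
      unfold ordKey at hlt
      split_ifs at hlt <;> cases abs_cases u <;> cases abs_cases w <;> constructor <;> omega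
  · rw [swapProd_inv_apply_of_not_mem hwr hw]
    exact ⟨by omega, hwv⟩

end Rows

section PrincipalIdeal

variable {n : ℕ} {O : Finset (ℤ × ℤ)} {i j : ℤ}

lemma maxPrec_princ (hp : inP n (i, j)) : maxPrec n (princ n (i, j)) = {(i, j)} := by
  ext ⟨x, y⟩
  simp only [maxPrec, princ, Finset.mem_filter, Finset.mem_singleton, mem_Pfin]
  constructor
  · rintro ⟨⟨-, hle⟩, hmax⟩
    exact (hmax (i, j) ⟨hp, le_rfl, le_rfl⟩ hle).symm
  · rintro ⟨⟩
    refine ⟨⟨hp, le_rfl, le_rfl⟩, fun ⟨x, y⟩ ⟨hq, hxi, hyj⟩ ⟨hix, hjy⟩ => ?_⟩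
    have hy : y = j := ordKey_injOn n hq.2.2.2 hp.2.2.2 (le_antisymm hyj hjy)
    rw [hy, show x = i from le_antisymm hxi hix]

lemma mem_MO_princ (hO : O ⊆ Pfin n) (hp : inP n (i, j)) {p : ℤ × ℤ} :
    p ∈ MO n O (princ n (i, j)) ↔ (p ∈ O ∧ ple n p (i, j)) ∨ p = (i, j) := by
  rw [MO, maxPrec_princ hp, Finset.mem_union, Finset.mem_inter, Finset.mem_singleton, princ,
    Finset.mem_filter]
  exact or_congr_left ⟨fun ⟨⟨_, hle⟩, hpO⟩ => ⟨hpO, hle⟩, fun ⟨hpO, hle⟩ => ⟨⟨hO hpO, hle⟩, hpO⟩⟩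

lemma rowList_MO_of_lt (hO : O ⊆ Pfin n) (hp : inP n (i, j)) {r : ℤ} (hr : r < i) :
    rowList n (MO n O (princ n (i, j))) r = (rowList n O r).filter (ordKey n · ≤ ordKey n j) := by
  simp only [rowList, List.filter_filter]
  refine List.filter_congr fun c _ => ?_
  simp [mem_MO_princ hO hp, ple, hr.le, hr.ne, and_comm]

lemma rowList_MO_of_gt (hO : O ⊆ Pfin n) (hp : inP n (i, j)) {r : ℤ} (hr : i < r) :
    rowList n (MO n O (princ n (i, j))) r = [] := by
  refine List.filter_eq_nil_iff.2 fun c _ => ?_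
  simp [mem_MO_princ hO hp, ple, hr.not_ge, hr.ne']

lemma rowList_MO_self (hO : O ⊆ Pfin n) (hp : inP n (i, j)) :
    rowList n (MO n O (princ n (i, j))) i =
      (rowList n O i).filter (ordKey n · < ordKey n j) ++ [j] := by
  have hj : j ∈ jList n := mem_jList_of_inP hp
  rw [← rowList_filter_append_filter_not n _ i (p := (ordKey n · < ordKey n j))
    (fun a b hab hb => by simp at hb ⊢; omega)]
  simp only [rowList, List.filter_filter]
  congr 1
  · refine List.filter_congr fun c _ => ?_
    rcases eq_or_ne c j with rfl | hcj
    · simp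
    · by_cases hc : ordKey n c < ordKey n j <;> simp [mem_MO_princ hO hp, ple, hc, le_of_lt, hcj]
  · have hnodup : (jList n).Nodup := (jList_pairwise n).imp fun h hab => h.ne (congrArg _ hab)
    calc _ = (jList n).filter (· = j) := List.filter_congr fun c hc => ?_
      _ = [j] := by rw [List.filter_eq, List.count_eq_one_of_mem hnodup hj]; rfl
    rcases eq_or_ne c j with rfl | hcj
    · simp [mem_MO_princ hO hp]
    · have hne : ordKey n c ≠ ordKey n j := fun h =>
        hcj (ordKey_injOn n (mem_jList.1 hc).2 (mem_jList.1 hj).2 h)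
      simp [mem_MO_princ hO hp, ple, hcj]
      omega

lemma rowPerm_MO_apply_self (hO : O ⊆ Pfin n) (hp : inP n (i, j)) :
    rowPerm n (MO n O (princ n (i, j))) i i = j := by
  rw [rowPerm, rowList_MO_self hO hp, swapProd_append, Equiv.Perm.mul_apply, swapProd_cons,
    swapProd_nil, mul_one, Equiv.swap_apply_left]
  rcases eq_or_ne j i with rfl | hji
  · rw [List.filter_eq_nil_iff.2, swapProd_nil, Equiv.Perm.one_apply]
    intro c hc
    obtain ⟨h1, -, h3, h4⟩ := inP_of_mem_rowList hO hc
    have := abs_le_ordKey (n := n) h4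
    rw [ordKey_of_pos (by omega : (0 : ℤ) < j), decide_eq_true_eq]
    omega
  · exact swapProd_apply_of_not_mem hji (by simp)

lemma rowPerm_MO_apply_of_lt (hO : O ⊆ Pfin n) (hp : inP n (i, j)) {r v : ℤ} (hr : r < i)
    (hv : ordKey n v ≤ ordKey n j) (hvr : v ≠ r) :
    rowPerm n (MO n O (princ n (i, j))) r v = rowPerm n O r v := by
  have hsplit := rowList_filter_append_filter_not n O r (p := (ordKey n · ≤ ordKey n j))
    (fun a b hab hb => by simp at hb ⊢; omega)
  have hfix :
      swapProd r ((rowList n O r).filter fun c => !decide (ordKey n c ≤ ordKey n j)) v = v :=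
    swapProd_apply_of_not_mem hvr (by simp [hv])
  rw [rowPerm, rowPerm, rowList_MO_of_lt hO hp hr]
  conv_rhs => rw [← hsplit, swapProd_append, Equiv.Perm.mul_apply, hfix]

lemma rowPerm_MO_apply_bounds_of_lt (hO : O ⊆ Pfin n) (hp : inP n (i, j)) {r v : ℤ}
    (hr0 : 0 < r) (hr : r < i) (hv : ordKey n v ≤ ordKey n j) (hrv : r ≤ |v|) :
    ordKey n (rowPerm n (MO n O (princ n (i, j))) r v) ≤ ordKey n j ∧
      r ≤ |rowPerm n (MO n O (princ n (i, j))) r v| := by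
  obtain ⟨-, -, hij, hjn⟩ := inP_mk_iff.1 hp
  rw [rowPerm, rowList_MO_of_lt hO hp hr]
  rcases swapProd_apply_mem r ((rowList n O r).filter (ordKey n · ≤ ordKey n j)) v with h | h | h
  · rw [h]
    exact ⟨hv, hrv⟩
  · have := abs_le_ordKey hjn
    rw [h, ordKey_of_pos hr0, abs_of_pos hr0]
    exact ⟨by omega, le_rfl⟩
  · rw [List.mem_filter, decide_eq_true_eq] at h
    exact ⟨h.2, (inP_of_mem_rowList hO h.1).2.2.1⟩

lemma rowsPerm_MO_apply (hO : O ⊆ Pfin n) (hp : inP n (i, j)) {m : ℕ} (hm : (m : ℤ) < i)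
    {v : ℤ} (hv : ordKey n v ≤ ordKey n j) (hmv : (m : ℤ) < |v|) :
    rowsPerm n (MO n O (princ n (i, j))) 0 m v = rowsPerm n O 0 m v := by
  induction m generalizing v with
  | zero => rfl
  | succ m ih =>
    have hlast (S : Finset (ℤ × ℤ)) :
        rowsPerm n S 0 (m + 1) v = rowsPerm n S 0 m (rowPerm n S (m + 1) v) := by
      rw [rowsPerm_add, rowsPerm_succ, rowsPerm_zero, mul_one, zero_add, Equiv.Perm.mul_apply]
    push_cast at hm hmv
    obtain ⟨hu, hmu⟩ := rowPerm_MO_apply_bounds_of_lt hO hp (by omega) hm hv hmv.le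
    rw [hlast, hlast, ← rowPerm_MO_apply_of_lt hO hp hm hv (by cases abs_cases v <;> omega)]
    exact ih (by omega) hu (by omega)

end PrincipalIdeal

lemma rMap_eq_rowsPerm_inv_apply {n : ℕ} {O : Finset (ℤ × ℤ)} (hO : O ⊆ Pfin n) {k : ℕ}
    {j : ℤ} (hp : inP n (k + 1, j)) : rMap n O (k + 1) j = (rowsPerm n O k (n - k))⁻¹ j := by
  obtain ⟨-, hkn, hkj, -⟩ := inP_mk_iff.1 hp
  obtain ⟨l, hl⟩ : ∃ l, n - k = l + 1 := ⟨n - k - 1, by omega⟩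
  have hupper : rowsPerm n (MO n O (princ n (k + 1, j))) (k + 1) l = 1 := by
    refine List.prod_eq_one fun x hx => ?_
    obtain ⟨a, ha, rfl⟩ := List.mem_map.1 hx
    rw [List.mem_range'_1] at ha
    rw [rowPerm, rowList_MO_of_gt hO hp (by omega), swapProd_nil]
  have hwM : wPerm n (MO n O (princ n (k + 1, j))) (k + 1) = rowsPerm n O 0 k j := by
    rw [wPerm_eq_rowsPerm_mul n _ (by omega : k ≤ n), hl, rowsPerm_succ, hupper, mul_one,
      Equiv.Perm.mul_apply, rowPerm_MO_apply_self hO hp,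
      rowsPerm_MO_apply hO hp (by omega) le_rfl (by omega)]
  rw [rMap, wOJ, Equiv.Perm.mul_apply, hwM, wPerm_eq_rowsPerm_mul n O (by omega : k ≤ n),
    mul_inv_rev, Equiv.Perm.mul_apply, Equiv.Perm.inv_eq_iff_eq.2 rfl]

theorem stmt5_general (n : ℕ) (O : Finset (ℤ × ℤ)) (hO : O ⊆ Pfin n)
    (i j : ℤ) (hp : inP n (i, j)) :
    i ≤ |rMap n O i j| ∧ ordKey n |rMap n O i j| ≤ ordKey n (-j) := by
  obtain ⟨hi, hin, hij, hjn⟩ := inP_mk_iff.1 hp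
  have hj0 : j ≠ 0 := (mem_jList.1 (mem_jList_of_inP hp)).1
  obtain ⟨k, rfl⟩ : ∃ k : ℕ, i = k + 1 := ⟨(i - 1).toNat, by omega⟩
  rw [rMap_eq_rowsPerm_inv_apply hO hp]
  obtain ⟨hlow, hup⟩ := abs_rowsPerm_inv_apply_mem_Icc hO (k := n - k) le_rfl (by omega)
    (⟨hij, hjn⟩ : |j| ∈ Set.Icc ((k : ℤ) + 1) n)
  refine ⟨hlow, ?_⟩
  rw [ordKey_of_pos (by omega)]
  rcases lt_or_gt_of_ne hj0 with hj | hj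
  · rw [ordKey_of_pos (by omega), ← abs_of_neg hj]
    exact abs_rowsPerm_inv_apply_le hO (show j ≤ k by omega)
  · rw [ordKey_of_nonpos (by omega)]
    cases abs_cases j <;> omega

/-- For `(i,j) ∈ P`: `|r(i,j)| ≥ i` and `|r(i,j)| ⩽̇ −j` in the order `⋖`. -/
theorem stmt5 (n : ℕ) (O : Finset (ℤ × ℤ)) (hA : Aset n ⊆ O) (hO : O ⊆ Pfin n)
    (i j : ℤ) (hp : inP n (i, j)) :
    i ≤ |rMap n O i j| ∧ ordKey n |rMap n O i j| ≤ ordKey n (-j) :=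
  stmt5_general n O hO i j hp

end
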